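/- Let X be a finite alphabet and P, Q probability distributions on X with full support, and α > 0. Then the Rényi divergence of order α/(1+α), given by D_{α/(1+α)}(P‖Q) = (1+α)·log( Σ_x P(x)^{α/(1+α)} Q(x)^{1/(1+α)} )^{-1}, equals min over probability distributions V on X of α·D(V‖P) + D(V‖Q), and the minimum is attained at V*(x) = P(x)^{α/(1+α)} Q(x)^{1/(1+α)} / Σ_{x'} P(x')^{α/(1+α)} Q(x')^{1/(1+α)}. -/
import Mathlib

open scoped BigOperators

/-- KL divergence (base-2 logarithms) between finitely supported distributions. -/
noncomputable def KL {X : Type*} [Fintype X] (P Q : X → ℝ) : ℝ :=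
  ∑ x, P x * Real.logb 2 (P x / Q x)

/-- `P` is a probability distribution on the finite alphabet `X`. -/
def IsProb {X : Type*} [Fintype X] (P : X → ℝ) : Prop :=
  (∀ x, 0 ≤ P x) ∧ ∑ x, P x = 1

lemma gibbs {X : Type*} [Fintype X] (V W : X → ℝ) (hV : ∀ x, 0 ≤ V x)
    (hVs : ∑ x, V x = 1) (hW : ∀ x, 0 < W x) (hWs : ∑ x, W x = 1) :
    0 ≤ ∑ x, V x * Real.logb 2 (V x / W x) := by
  have key : ∑ x, V x * Real.log (W x / V x) ≤ 0 := by
    calc ∑ x, V x * Real.log (W x / V x) ≤ ∑ x, (W x - V x) := by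
          apply Finset.sum_le_sum
          intro x _
          rcases eq_or_lt_of_le (hV x) with h | h
          · simp [← h]
            exact (hW x).le
          · have h1 : 0 < W x / V x := div_pos (hW x) h
            have := Real.log_le_sub_one_of_pos h1
            calc V x * Real.log (W x / V x) ≤ V x * (W x / V x - 1) := by
                  exact mul_le_mul_of_nonneg_left this (hV x)
              _ = W x - V x := by field_simp
      _ = 0 := by rw [Finset.sum_sub_distrib, hVs, hWs]; ring
  have flip : ∑ x, V x * Real.log (V x / W x) = -∑ x, V x * Real.log (W x / V x) := by
    rw [← Finset.sum_neg_distrib]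
    apply Finset.sum_congr rfl
    intro x _
    rcases eq_or_lt_of_le (hV x) with h | h
    · simp [← h]
    · rw [Real.log_div (ne_of_gt h) (ne_of_gt (hW x)),
        Real.log_div (ne_of_gt (hW x)) (ne_of_gt h)]
      ring
  have h2 : (0:ℝ) < Real.log 2 := Real.log_pos (by norm_num)
  have : 0 ≤ ∑ x, V x * Real.log (V x / W x) := by rw [flip]; linarith
  have heq : ∑ x, V x * Real.logb 2 (V x / W x)
      = (∑ x, V x * Real.log (V x / W x)) / Real.log 2 := by
    rw [Finset.sum_div]
    apply Finset.sum_congr rfl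
    intro x _
    rw [Real.logb]
    ring
  rw [heq]
  positivity

/-- The Rényi divergence of order `α/(1+α)` equals
`min_V { α·D(V‖P) + D(V‖Q) }`, attained at the geometric tilting `V*`. -/
theorem stmt5 {X : Type*} [Fintype X] (α : ℝ) (hα : 0 < α)
    (P Q : X → ℝ) (hP : ∀ x, 0 < P x) (hQ : ∀ x, 0 < Q x)
    (hPs : ∑ x, P x = 1) (hQs : ∑ x, Q x = 1) :
    let Z : ℝ := ∑ x, P x ^ (α/(1+α)) * Q x ^ (1/(1+α))
    let Vstar : X → ℝ := fun x => P x ^ (α/(1+α)) * Q x ^ (1/(1+α)) / Z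
    IsProb Vstar ∧
    α * KL Vstar P + KL Vstar Q = -(1+α) * Real.logb 2 Z ∧
    ∀ V : X → ℝ, IsProb V →
      -(1+α) * Real.logb 2 Z ≤ α * KL V P + KL V Q := by
  intro Z Vstar
  have hone : (0:ℝ) < 1 + α := by linarith
  have hne : Nonempty X := by
    by_contra hc
    rw [not_nonempty_iff] at hc
    simp [Finset.univ_eq_empty] at hPs
  have hterm : ∀ x, 0 < P x ^ (α/(1+α)) * Q x ^ (1/(1+α)) := fun x =>
    mul_pos (Real.rpow_pos_of_pos (hP x) _) (Real.rpow_pos_of_pos (hQ x) _)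
  have hZ : 0 < Z := Finset.sum_pos (fun x _ => hterm x) Finset.univ_nonempty
  have hVpos : ∀ x, 0 < Vstar x := fun x => div_pos (hterm x) hZ
  have hVsum : ∑ x, Vstar x = 1 := by
    show ∑ x, P x ^ (α/(1+α)) * Q x ^ (1/(1+α)) / Z = 1
    rw [← Finset.sum_div, div_self hZ.ne']
  have hl2 : Real.log 2 ≠ 0 := ne_of_gt (Real.log_pos (by norm_num))
  -- key identity
  have key : ∀ V : X → ℝ, (∀ x, 0 ≤ V x) → ∑ x, V x = 1 →
      α * KL V P + KL V Q
        = (1+α) * (∑ x, V x * Real.logb 2 (V x / Vstar x)) - (1+α) * Real.logb 2 Z := by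
    intro V hV hVs
    have hsum : ∑ x, V x * Real.logb 2 Z = Real.logb 2 Z := by
      rw [← Finset.sum_mul, hVs, one_mul]
    unfold KL
    rw [Finset.mul_sum, ← Finset.sum_add_distrib]
    have : (1+α) * (∑ x, V x * Real.logb 2 (V x / Vstar x)) - (1+α) * Real.logb 2 Z
        = ∑ x, ((1+α) * (V x * Real.logb 2 (V x / Vstar x)) - (1+α) * (V x * Real.logb 2 Z)) := by
      rw [Finset.sum_sub_distrib, ← Finset.mul_sum, ← Finset.mul_sum, hsum]
    rw [this]
    apply Finset.sum_congr rfl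
    intro x _
    rcases eq_or_lt_of_le (hV x) with h | h
    · simp [← h]
    · have e1 : Real.log (V x / P x) = Real.log (V x) - Real.log (P x) :=
        Real.log_div h.ne' (hP x).ne'
      have e2 : Real.log (V x / Q x) = Real.log (V x) - Real.log (Q x) :=
        Real.log_div h.ne' (hQ x).ne'
      have e3 : Real.log (V x / Vstar x)
          = Real.log (V x) - (α/(1+α) * Real.log (P x) + 1/(1+α) * Real.log (Q x) - Real.log Z) := by
        show Real.log (V x / (P x ^ (α/(1+α)) * Q x ^ (1/(1+α)) / Z)) = _
        rw [Real.log_div h.ne' (ne_of_gt (div_pos (hterm x) hZ)),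
          Real.log_div (hterm x).ne' hZ.ne',
          Real.log_mul (ne_of_gt (Real.rpow_pos_of_pos (hP x) _))
            (ne_of_gt (Real.rpow_pos_of_pos (hQ x) _)),
          Real.log_rpow (hP x), Real.log_rpow (hQ x)]
      simp only [Real.logb, e1, e2, e3]
      field_simp
      ring
  have keystar := key Vstar (fun x => (hVpos x).le) hVsum
  have hzero : ∑ x, Vstar x * Real.logb 2 (Vstar x / Vstar x) = 0 := by
    apply Finset.sum_eq_zero
    intro x _
    rw [div_self (hVpos x).ne']
    simp
  refine ⟨⟨fun x => (hVpos x).le, hVsum⟩, ?_, ?_⟩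
  · rw [keystar, hzero]; ring
  · intro V hVp
    rw [key V hVp.1 hVp.2]
    have hg := gibbs V Vstar hVp.1 hVp.2 hVpos hVsum
    nlinarith
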